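/- arXiv:1304.3145 — 7 statements merged into one kernel-verified Lean document; each statement's English description precedes it below -/
import Mathlib

section
/- For bijections L, π : C → Fin n, the vote π is coincident with L (single-peaked w.r.t. L) if and only if for every threshold j, the set {c ∈ C : π(c) ≥ j} lies consecutively in L, i.e., forms an interval of L-values. -/
/-! Both conditions say that no candidate lying between two others in `L` is ranked by `π`
below both of them: `{c : j ≤ π c}` is `L`-consecutive for every `j` iff
`min (π c₁) (π c₂) ≤ π c` whenever `L c₁ < L c < L c₂`, and since `π` is injective this
non-strict condition gives the strict inequality `π a < π b` demanded by coincidence. -/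

/-- A vote `π` is coincident with (single-peaked w.r.t.) a societal order `L`. -/
def Coincident {C : Type*} {n : ℕ} (L π : C ≃ Fin n) : Prop :=
  ∀ a b c : C, ((L a < L b ∧ L b < L c) ∨ (L c < L b ∧ L b < L a)) →
    π b < π c → π a < π b

section

variable {C : Type*} {n : ℕ} {L π : C ≃ Fin n}

theorem Coincident.min_le_of_between (h : Coincident L π) {c₁ c c₂ : C}
    (h₁ : L c₁ < L c) (h₂ : L c < L c₂) : min (π c₁) (π c₂) ≤ π c := by
  by_contra! hc
  rw [lt_min_iff] at hc
  exact lt_asymm hc.1 (h c₁ c c₂ (Or.inl ⟨h₁, h₂⟩) hc.2)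

theorem coincident_of_min_le_of_between
    (h : ∀ c₁ c c₂, L c₁ < L c → L c < L c₂ → min (π c₁) (π c₂) ≤ π c) :
    Coincident L π := by
  intro a b c hord hbc
  have hmin : min (π a) (π c) ≤ π b := by
    rcases hord with ⟨hab, hbc⟩ | ⟨hcb, hba⟩
    · exact h a b c hab hbc
    · exact min_comm (π a) (π c) ▸ h c b a hcb hba
  have hL : L a ≠ L b := hord.elim (fun h => h.1.ne) (fun h => h.2.ne')
  have hπ : π a ≠ π b := π.injective.ne (ne_of_apply_ne L hL)
  exact hπ.lt_or_gt.resolve_right fun hba => hmin.not_gt (lt_min hba hbc)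

theorem coincident_iff_min_le_of_between :
    Coincident L π ↔
      ∀ c₁ c c₂, L c₁ < L c → L c < L c₂ → min (π c₁) (π c₂) ≤ π c :=
  ⟨fun h _ _ _ => h.min_le_of_between, coincident_of_min_le_of_between⟩

end

/-- Interval characterization of single-peakedness: `π` is coincident with `L`
iff every upper set `{c : π c ≥ j}` lies consecutively in `L`. -/
theorem coincident_iff_upper_sets_consecutive {C : Type*} {n : ℕ}
    (L π : C ≃ Fin n) :
    Coincident L π ↔
      ∀ j : Fin n, ∀ c₁ c₂ c : C,
        j ≤ π c₁ → j ≤ π c₂ → L c₁ < L c → L c < L c₂ → j ≤ π c := by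
  rw [coincident_iff_min_le_of_between]
  constructor
  · intro h j c₁ c₂ c hj₁ hj₂ h₁ h₂
    exact (le_min hj₁ hj₂).trans (h c₁ c c₂ h₁ h₂)
  · intro h c₁ c c₂ h₁ h₂
    exact h _ c₁ c₂ c (min_le_left _ _) (min_le_right _ _) h₁ h₂
end

section
/- Let L : C ∪ {p} → Fin (n+1) be a bijection, and partition C into C_L = {c : L(c) < L(p)} and C_R = {c : L(c) > L(p)}. Let π be a bijection (vote) with peak p (i.e., π(p) is maximal). Then π is coincident with L if and only if π restricted to C_L is order-reversing in distance from p and likewise on C_R; precisely, for all c, c' ∈ C_L (resp. c, c' ∈ C_R), L(c) > L(c') implies π(c) > π(c') on C_L (resp. L(c) < L(c') implies π(c) > π(c') on C_R). -/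
open Set

lemma Set.mem_uIoo_or_mem_uIoo_of_ne {α : Type*} [LinearOrder α] {a b c x : α}
    (hx : x ∈ uIoo a b) (hxc : x ≠ c) : x ∈ uIoo a c ∨ x ∈ uIoo c b := by
  simp only [uIoo_eq_union, mem_union, mem_Ioo] at hx ⊢
  rcases hxc.lt_or_gt with h | h <;> tauto

section Coincident

variable {C : Type*} {m : ℕ} {L π : C ≃ Fin m}

lemma coincident_iff_mem_uIoo :
    Coincident L π ↔ ∀ a b c, L b ∈ uIoo (L a) (L c) → π b < π c → π a < π b := by
  simp only [uIoo_eq_union, mem_union, mem_Ioo]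
  rfl

theorem coincident_iff_of_isPeak {p : C} (hpeak : ∀ c, π c ≤ π p) :
    Coincident L π ↔ ∀ x y, L x ∈ uIoo (L p) (L y) → π y < π x := by
  rw [coincident_iff_mem_uIoo]
  constructor
  · intro h x y hx
    have hxp : x ≠ p := by
      rintro rfl
      exact left_notMem_uIoo hx
    exact h y x p (uIoo_comm (L p) (L y) ▸ hx) ((hpeak x).lt_of_ne (π.injective.ne hxp))
  · intro h a b c hb hbc
    have hbp : L b ≠ L p := by
      intro hbp
      rw [L.injective hbp] at hbc
      exact (hbc.trans_le (hpeak c)).false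
    rcases mem_uIoo_or_mem_uIoo_of_ne hb hbp with hab | hbc'
    · exact h b a (uIoo_comm (L a) (L p) ▸ hab)
    · exact absurd hbc (h b c hbc').asymm

end Coincident

/-- The peak `p` is modelled as `none`, the other candidates as `Fin n`. -/
theorem coincident_iff_two_sides {n : ℕ}
    (L π : Option (Fin n) ≃ Fin (n + 1))
    (hpeak : ∀ c : Option (Fin n), π c ≤ π none) :
    Coincident L π ↔
      ((∀ c c' : Fin n, L (some c) < L none → L (some c') < L none →
          L (some c') < L (some c) → π (some c') < π (some c)) ∧
       (∀ c c' : Fin n, L none < L (some c) → L none < L (some c') →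
          L (some c) < L (some c') → π (some c') < π (some c))) := by
  rw [coincident_iff_of_isPeak hpeak]
  constructor
  · intro h
    exact ⟨fun c c' hc _ hc'c => h _ _ (mem_uIoo_of_gt hc'c hc),
      fun c c' hc _ hcc' => h _ _ (mem_uIoo_of_lt hc hcc')⟩
  · rintro ⟨hleft, hright⟩ (_ | x) (_ | y) hx
    · exact absurd hx left_notMem_uIoo
    · exact absurd hx left_notMem_uIoo
    · simp at hx
    · rw [uIoo_eq_union] at hx
      rcases hx with ⟨hpx, hxy⟩ | ⟨hyx, hxp⟩
      · exact hright x y hpx (hpx.trans hxy) hxy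
      · exact hleft x y hxp (hyx.trans hxp) hyx
end

section
/- Given a harmonious order L on C ∪ {p} with C_L, C_R as the candidates on the left and right of p, the number of votes with peak p coincident with L is exactly the binomial coefficient C(|C_L| + |C_R|, |C_L|). Equivalently, a vote with peak p coincident with L is uniquely determined by choosing, for each position from highest to lowest below p, whether the next candidate comes from the left or the right side. -/
/-- Unimodal permutation with peak at `q`. -/
def Unimodal {n : ℕ} (q : Fin (n+1)) (ρ : Fin (n+1) ≃ Fin (n+1)) : Prop :=
  ρ q = Fin.last n ∧ (∀ a b : Fin (n+1), a < b → b ≤ q → ρ a < ρ b) ∧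
    (∀ a b : Fin (n+1), q ≤ b → b < a → ρ a < ρ b)

lemma coincident_iff_unimodal {n : ℕ} (q : Fin (n+1)) (ρ : Fin (n+1) ≃ Fin (n+1)) :
    (Coincident (Equiv.refl (Fin (n+1))) ρ ∧ ∀ x, ρ x ≤ ρ q) ↔ Unimodal q ρ := by
  constructor
  · rintro ⟨hU, hpk⟩
    have hlast : ρ q = Fin.last n := by
      have := hpk (ρ.symm (Fin.last n))
      rw [Equiv.apply_symm_apply] at this
      exact le_antisymm (Fin.le_last _) this
    have hne : ∀ x, x ≠ q → ρ x < ρ q := fun x hx =>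
      lt_of_le_of_ne (hpk x) (fun h => hx (ρ.injective h))
    refine ⟨hlast, ?_, ?_⟩
    · intro a b hab hbq
      rcases eq_or_lt_of_le hbq with rfl | hbq
      · exact hne a hab.ne
      · exact hU a b q (Or.inl ⟨hab, hbq⟩) (hne b hbq.ne)
    · intro a b hqb hba
      rcases eq_or_lt_of_le hqb with rfl | hqb
      · exact hne a hba.ne'
      · exact hU a b q (Or.inr ⟨hqb, hba⟩) (hne b hqb.ne')
  · rintro ⟨hlast, hL, hR⟩
    constructor
    · rintro a b c (⟨hab, hbc⟩ | ⟨hcb, hba⟩) hbc'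
      · rcases le_or_gt b q with hbq | hqb
        · exact hL a b hab hbq
        · exact absurd (hR c b hqb.le hbc) (not_lt.mpr hbc'.le)
      · rcases le_or_gt q b with hqb | hbq
        · exact hR a b hqb hba
        · exact absurd (hL c b hcb hbq.le) (not_lt.mpr hbc'.le)
    · intro x
      rw [hlast]; exact Fin.le_last _

section Build
variable {n : ℕ} (q : Fin (n + 1)) (S : Finset (Fin n)) (hS : S.card = (q : ℕ))

lemma card_compl_S (hS : S.card = (q : ℕ)) : Sᶜ.card = n - (q : ℕ) := by
  rw [Finset.card_compl, hS, Fintype.card_fin]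

/-- The unimodal map determined by the set `S` of left values. -/
def build : Fin (n + 1) → Fin (n + 1) := fun x =>
  if h : (x : ℕ) < (q : ℕ) then (S.orderEmbOfFin hS ⟨x, h⟩).castSucc
  else if h2 : (x : ℕ) = (q : ℕ) then Fin.last n
  else (Sᶜ.orderEmbOfFin (card_compl_S q S hS)
    ⟨n - x, by have := x.isLt; have := q.isLt; omega⟩).castSucc

lemma build_of_lt {x : Fin (n + 1)} (h : (x : ℕ) < (q : ℕ)) :
    build q S hS x = (S.orderEmbOfFin hS ⟨x, h⟩).castSucc := by
  unfold build; rw [dif_pos h]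

lemma build_of_eq {x : Fin (n + 1)} (h : (x : ℕ) = (q : ℕ)) :
    build q S hS x = Fin.last n := by
  unfold build; rw [dif_neg (by omega), dif_pos h]

lemma build_of_gt {x : Fin (n + 1)} (h : (q : ℕ) < (x : ℕ)) :
    build q S hS x = (Sᶜ.orderEmbOfFin (card_compl_S q S hS)
      ⟨n - x, by have := x.isLt; have := q.isLt; omega⟩).castSucc := by
  unfold build; rw [dif_neg (by omega), dif_neg (by omega)]

lemma build_injective : Function.Injective (build q S hS) := by
  intro x y hxy
  rcases lt_trichotomy (x : ℕ) (q : ℕ) with hx | hx | hx <;>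
    rcases lt_trichotomy (y : ℕ) (q : ℕ) with hy | hy | hy
  · rw [build_of_lt q S hS hx, build_of_lt q S hS hy] at hxy
    have := (S.orderEmbOfFin hS).injective (Fin.castSucc_injective _ hxy)
    simp only [Fin.mk.injEq] at this
    exact Fin.ext this
  · rw [build_of_lt q S hS hx, build_of_eq q S hS hy] at hxy
    exact absurd hxy (Fin.castSucc_lt_last _).ne
  · rw [build_of_lt q S hS hx, build_of_gt q S hS hy] at hxy
    have h1 := Finset.orderEmbOfFin_mem S hS ⟨x, hx⟩
    have h2 := Finset.orderEmbOfFin_mem Sᶜ (card_compl_S q S hS)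
      ⟨n - y, by have := y.isLt; omega⟩
    rw [Fin.castSucc_injective _ hxy] at h1
    exact absurd h1 (Finset.mem_compl.mp h2)
  · rw [build_of_eq q S hS hx, build_of_lt q S hS hy] at hxy
    exact absurd hxy.symm (Fin.castSucc_lt_last _).ne
  · exact Fin.ext (hx.trans hy.symm)
  · rw [build_of_eq q S hS hx, build_of_gt q S hS hy] at hxy
    exact absurd hxy.symm (Fin.castSucc_lt_last _).ne
  · rw [build_of_gt q S hS hx, build_of_lt q S hS hy] at hxy
    have h1 := Finset.orderEmbOfFin_mem S hS ⟨y, hy⟩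
    have h2 := Finset.orderEmbOfFin_mem Sᶜ (card_compl_S q S hS)
      ⟨n - x, by have := x.isLt; omega⟩
    rw [← Fin.castSucc_injective _ hxy] at h1
    exact absurd h1 (Finset.mem_compl.mp h2)
  · rw [build_of_gt q S hS hx, build_of_eq q S hS hy] at hxy
    exact absurd hxy (Fin.castSucc_lt_last _).ne
  · rw [build_of_gt q S hS hx, build_of_gt q S hS hy] at hxy
    have := (Sᶜ.orderEmbOfFin (card_compl_S q S hS)).injective
      (Fin.castSucc_injective _ hxy)
    simp only [Fin.mk.injEq] at this
    have hx' := x.isLt; have hy' := y.isLt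
    exact Fin.ext (by omega)

/-- The unimodal permutation determined by `S`. -/
noncomputable def buildPerm : Fin (n + 1) ≃ Fin (n + 1) :=
  Equiv.ofBijective _ (Finite.injective_iff_bijective.mp (build_injective q S hS))

lemma buildPerm_apply (x : Fin (n + 1)) : buildPerm q S hS x = build q S hS x := rfl

end Build

section Build2
variable {n : ℕ} (q : Fin (n + 1)) (S : Finset (Fin n)) (hS : S.card = (q : ℕ))

lemma unimodal_buildPerm : Unimodal q (buildPerm q S hS) := by
  refine ⟨build_of_eq q S hS rfl, ?_, ?_⟩
  · intro a b hab hbq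
    rcases eq_or_lt_of_le hbq with heq | hbq
    · have hb : (b : ℕ) = (q : ℕ) := congrArg Fin.val heq
      have ha : (a : ℕ) < (q : ℕ) := by
        have : (a : ℕ) < (b : ℕ) := hab; omega
      rw [buildPerm_apply, buildPerm_apply, build_of_eq q S hS hb,
        build_of_lt q S hS ha]
      exact Fin.castSucc_lt_last _
    · have ha : (a : ℕ) < (q : ℕ) := lt_trans hab hbq
      rw [buildPerm_apply, buildPerm_apply, build_of_lt q S hS ha,
        build_of_lt q S hS hbq]
      rw [Fin.castSucc_lt_castSucc_iff]
      exact (S.orderEmbOfFin hS).strictMono (Fin.mk_lt_mk.mpr hab)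
  · intro a b hqb hba
    rcases eq_or_lt_of_le hqb with heq | hqb
    · have hb : (b : ℕ) = (q : ℕ) := (congrArg Fin.val heq).symm
      have ha : (q : ℕ) < (a : ℕ) := by
        have : (b : ℕ) < (a : ℕ) := hba; omega
      rw [buildPerm_apply, buildPerm_apply, build_of_eq q S hS hb,
        build_of_gt q S hS ha]
      exact Fin.castSucc_lt_last _
    · have ha : (q : ℕ) < (a : ℕ) := lt_trans hqb hba
      rw [buildPerm_apply, buildPerm_apply, build_of_gt q S hS ha,
        build_of_gt q S hS hqb]
      rw [Fin.castSucc_lt_castSucc_iff]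
      apply (Sᶜ.orderEmbOfFin (card_compl_S q S hS)).strictMono
      have h1 := a.isLt
      exact Fin.mk_lt_mk.mpr (by omega)

lemma buildPerm_symm_lt_iff (v : Fin n) :
    (buildPerm q S hS).symm v.castSucc < q ↔ v ∈ S := by
  constructor
  · intro h
    set x := (buildPerm q S hS).symm v.castSucc with hx
    have hbx : buildPerm q S hS x = v.castSucc := Equiv.apply_symm_apply _ _
    have hxq : (x : ℕ) < (q : ℕ) := h
    rw [buildPerm_apply, build_of_lt q S hS hxq] at hbx
    have := Fin.castSucc_injective _ hbx
    rw [← this]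
    exact Finset.orderEmbOfFin_mem S hS _
  · intro hv
    have : v ∈ Set.range (S.orderEmbOfFin hS) := by
      rw [Finset.range_orderEmbOfFin]; exact hv
    obtain ⟨i, hi⟩ := this
    have hiq : (i : ℕ) < (q : ℕ) := i.isLt
    have hin : (i : ℕ) < n + 1 := by have := q.isLt; omega
    have hb : buildPerm q S hS ⟨i, hin⟩ = v.castSucc := by
      rw [buildPerm_apply, build_of_lt q S hS hiq, ← hi]
    have := congrArg (buildPerm q S hS).symm hb
    rw [Equiv.symm_apply_apply] at this
    rw [← this]
    exact hiq

section Count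
variable {n : ℕ} (q : Fin (n + 1))

/-- The set of values (in `Fin n`, i.e. non-top values) placed left of the peak. -/
def leftSet (ρ : Fin (n + 1) ≃ Fin (n + 1)) : Finset (Fin n) :=
  Finset.univ.filter (fun v => ρ.symm v.castSucc < q)

lemma mem_leftSet {ρ : Fin (n + 1) ≃ Fin (n + 1)} {v : Fin n} :
    v ∈ leftSet q ρ ↔ ρ.symm v.castSucc < q := by simp [leftSet]

lemma leftSet_card (ρ : Fin (n + 1) ≃ Fin (n + 1)) (h : Unimodal q ρ) :
    (leftSet q ρ).card = (q : ℕ) := by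
  obtain ⟨hlast, hL, hR⟩ := h
  have hne : ∀ x : Fin (n + 1), x ∈ Finset.Iio q → ρ x ≠ Fin.last n := by
    intro x hx heq
    rw [← hlast] at heq
    exact absurd (ρ.injective heq) (Finset.mem_Iio.mp hx).ne
  rw [← Fin.card_Iio q]
  exact Finset.card_bij' (fun v _ => ρ.symm v.castSucc)
    (fun x hx => (ρ x).castPred (hne x hx))
    (fun v hv => Finset.mem_Iio.mpr ((mem_leftSet q).mp hv))
    (fun x hx => (mem_leftSet q).mpr
      (by rw [Fin.castSucc_castPred, Equiv.symm_apply_apply]; exact Finset.mem_Iio.mp hx))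
    (fun v hv => Fin.castSucc_injective _
      (by rw [Fin.castSucc_castPred, Equiv.apply_symm_apply]))
    (fun x hx => by simp only [Fin.castSucc_castPred, Equiv.symm_apply_apply])

lemma unimodal_left_eq {ρ : Fin (n + 1) ≃ Fin (n + 1)} (h : Unimodal q ρ)
    (T : Finset (Fin (n + 1)))
    (hT : T = (leftSet q ρ).map ⟨Fin.castSucc, Fin.castSucc_injective n⟩)
    (hc : T.card = (q : ℕ)) (i : Fin (q : ℕ)) :
    ρ (Fin.castLE q.isLt.le i) = T.orderEmbOfFin hc i := by
  obtain ⟨hlast, hL, hR⟩ := h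
  have key := Finset.orderEmbOfFin_unique hc
    (f := fun i : Fin (q : ℕ) => ρ (Fin.castLE q.isLt.le i)) ?_ ?_
  · exact congrFun key i
  · intro j
    have hne : ρ (Fin.castLE q.isLt.le j) ≠ Fin.last n := by
      intro heq
      rw [← hlast] at heq
      have h2 : (j : ℕ) = (q : ℕ) := congrArg Fin.val (ρ.injective heq)
      have := j.isLt
      omega
    rw [hT, Finset.mem_map]
    refine ⟨(ρ (Fin.castLE q.isLt.le j)).castPred hne, ?_, Fin.castSucc_castPred _ _⟩
    rw [mem_leftSet, Fin.castSucc_castPred, Equiv.symm_apply_apply]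
    exact Fin.mk_lt_mk.mpr j.isLt
  · intro a b hab
    exact hL _ _ hab (Nat.le_of_lt b.isLt)

lemma unimodal_right_eq {ρ : Fin (n + 1) ≃ Fin (n + 1)} (h : Unimodal q ρ)
    (T : Finset (Fin (n + 1)))
    (hT : T = (leftSet q ρ)ᶜ.map ⟨Fin.castSucc, Fin.castSucc_injective n⟩)
    (hc : T.card = n - (q : ℕ)) (i : Fin (n - (q : ℕ))) :
    ρ ⟨n - (i : ℕ), Nat.lt_succ_of_le (Nat.sub_le _ _)⟩ = T.orderEmbOfFin hc i := by
  obtain ⟨hlast, hL, hR⟩ := h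
  have hq := q.isLt
  have key := Finset.orderEmbOfFin_unique hc
    (f := fun i : Fin (n - (q : ℕ)) =>
      ρ ⟨n - (i : ℕ), Nat.lt_succ_of_le (Nat.sub_le _ _)⟩) ?_ ?_
  · exact congrFun key i
  · intro j
    have hj := j.isLt
    have hne : ρ ⟨n - (j : ℕ), Nat.lt_succ_of_le (Nat.sub_le _ _)⟩ ≠ Fin.last n := by
      intro heq
      rw [← hlast] at heq
      have := congrArg Fin.val (ρ.injective heq)
      simp at this
      omega
    rw [hT, Finset.mem_map]
    refine ⟨_, ?_, Fin.castSucc_castPred _ hne⟩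
    rw [Finset.mem_compl, mem_leftSet, Fin.castSucc_castPred, Equiv.symm_apply_apply]
    rw [not_lt, Fin.le_def]
    simp
    omega
  · intro a b hab
    have ha := a.isLt; have hb := b.isLt
    have h1 : (a : ℕ) < (b : ℕ) := hab
    exact hR _ _ (by rw [Fin.le_def]; simp; omega) (by rw [Fin.lt_def]; simp; omega)

lemma unimodal_leftSet_inj {ρ1 ρ2 : Fin (n + 1) ≃ Fin (n + 1)}
    (h1 : Unimodal q ρ1) (h2 : Unimodal q ρ2)
    (hS : leftSet q ρ1 = leftSet q ρ2) : ρ1 = ρ2 := by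
  have hq := q.isLt
  apply Equiv.ext
  intro x
  have hx' := x.isLt
  rcases lt_trichotomy (x : ℕ) (q : ℕ) with hx | hx | hx
  · set T := (leftSet q ρ1).map ⟨Fin.castSucc, Fin.castSucc_injective n⟩ with hTdef
    have hc : T.card = (q : ℕ) := by
      rw [hTdef, Finset.card_map, leftSet_card q ρ1 h1]
    have e1 := unimodal_left_eq q h1 T hTdef hc ⟨(x : ℕ), hx⟩
    have e2 := unimodal_left_eq q h2 T (by rw [hTdef, hS]) hc ⟨(x : ℕ), hx⟩
    have hxx : Fin.castLE q.isLt.le (⟨(x : ℕ), hx⟩ : Fin (q : ℕ)) = x := Fin.ext rfl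
    rw [hxx] at e1 e2
    rw [e1, e2]
  · rw [show x = q from Fin.ext hx, h1.1, h2.1]
  · set T := (leftSet q ρ1)ᶜ.map ⟨Fin.castSucc, Fin.castSucc_injective n⟩ with hTdef
    have hc : T.card = n - (q : ℕ) := by
      rw [hTdef, Finset.card_map, Finset.card_compl, leftSet_card q ρ1 h1, Fintype.card_fin]
    have e1 := unimodal_right_eq q h1 T hTdef hc ⟨n - (x : ℕ), by omega⟩
    have e2 := unimodal_right_eq q h2 T (by rw [hTdef, hS]) hc ⟨n - (x : ℕ), by omega⟩
    have hxx : (⟨n - (n - (x : ℕ)), Nat.lt_succ_of_le (Nat.sub_le _ _)⟩ : Fin (n + 1)) = x :=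
      Fin.ext (show n - (n - (x : ℕ)) = (x : ℕ) by omega)
    rw [hxx] at e1 e2
    rw [e1, e2]

end Count

lemma card_unimodal {n : ℕ} (q : Fin (n + 1)) :
    Nat.card {ρ : Fin (n + 1) ≃ Fin (n + 1) // Unimodal q ρ} = n.choose (q : ℕ) := by
  have h2 : Nat.card {S : Finset (Fin n) // S.card = (q : ℕ)} = n.choose (q : ℕ) := by
    rw [Nat.card_eq_fintype_card, Fintype.card_finset_len, Fintype.card_fin]
  rw [← h2]
  apply Nat.card_eq_of_bijective (fun ρ => ⟨leftSet q ρ.1, leftSet_card q ρ.1 ρ.2⟩)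
  constructor
  · rintro ⟨ρ1, h1⟩ ⟨ρ2, hh2⟩ h
    exact Subtype.ext (unimodal_leftSet_inj q h1 hh2 (congrArg Subtype.val h))
  · rintro ⟨S, hSc⟩
    refine ⟨⟨buildPerm q S hSc, unimodal_buildPerm q S hSc⟩, ?_⟩
    apply Subtype.ext
    ext v
    rw [mem_leftSet]
    exact buildPerm_symm_lt_iff q S hSc v

/-- The number of votes with peak `p` (modelled as `none`) coincident with a
harmonious order `L` equals `C(|C_L| + |C_R|, |C_L|)`, where
`C_L = {c : L c < L p}` and `|C_L| + |C_R| = n`. -/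
theorem card_singlePeaked_votes_with_peak_p {n : ℕ}
    (L : Option (Fin n) ≃ Fin (n + 1)) :
    Nat.card {π : Option (Fin n) ≃ Fin (n + 1) //
        Coincident L π ∧ ∀ c : Option (Fin n), π c ≤ π none} =
      Nat.choose n
        ((Finset.univ.filter (fun c : Fin n => L (some c) < L none)).card) := by
  have hk : (Finset.univ.filter (fun c : Fin n => L (some c) < L none)).card
      = ((L none : Fin (n + 1)) : ℕ) := by
    rw [← Fin.card_Iio (L none)]
    apply Finset.card_bij (fun c _ => L (some c))
    · intro c hc; rw [Finset.mem_Iio]; exact (Finset.mem_filter.mp hc).2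
    · intro c1 h1 c2 h2 h
      exact Option.some_injective _ (L.injective h)
    · intro x hx
      rcases hsome : L.symm x with _ | c
      · exfalso
        have h1 := congrArg L hsome
        rw [Equiv.apply_symm_apply] at h1
        rw [h1] at hx
        exact absurd (Finset.mem_Iio.mp hx) (lt_irrefl _)
      · have hx' : L (some c) = x := by rw [← hsome, Equiv.apply_symm_apply]
        exact ⟨c, Finset.mem_filter.mpr ⟨Finset.mem_univ _,
          by rw [hx']; exact Finset.mem_Iio.mp hx⟩, hx'⟩
  rw [hk, ← card_unimodal (L none)]
  apply Nat.card_congr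
  refine Equiv.subtypeEquiv (Equiv.equivCongr L (Equiv.refl (Fin (n + 1)))) ?_
  intro π
  rw [← coincident_iff_unimodal]
  have hζ : ∀ x, (Equiv.equivCongr L (Equiv.refl (Fin (n + 1)))) π x = π (L.symm x) := by
    intro x; simp [Equiv.equivCongr_apply_apply]
  constructor
  · rintro ⟨hC, hpk⟩
    constructor
    · intro a b c h hbc
      rw [hζ, hζ]
      rw [hζ, hζ] at hbc
      apply hC (L.symm a) (L.symm b) (L.symm c) _ hbc
      simpa using h
    · intro x
      rw [hζ, hζ, Equiv.symm_apply_apply]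
      exact hpk _
  · rintro ⟨hC, hpk⟩
    constructor
    · intro a b c h hbc
      have := hC (L a) (L b) (L c) (by simpa using h) (by rw [hζ, hζ]; simpa using hbc)
      rw [hζ, hζ] at this
      simpa using this
    · intro c
      have := hpk (L c)
      rw [hζ, hζ, Equiv.symm_apply_apply, Equiv.symm_apply_apply] at this
      exact this
end Build2
end

section
/- If a single-peaked unweighted Borda manipulation instance (with harmonious order L, all manipulator votes required to be coincident with L) has a successful manipulation, then it has a successful manipulation in which every manipulator places the distinguished candidate p in his or her highest position. -/
section SinglePeaked

variable {C : Type*} {n : ℕ} {L π : C ≃ Fin n}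

theorem coincident_trans_revPerm_iff : Coincident (L.trans Fin.revPerm) π ↔ Coincident L π := by
  simp only [Coincident, Equiv.trans_apply, Fin.revPerm_apply, Fin.rev_lt_rev]
  exact forall₃_congr fun a b c => imp_congr_left (by tauto)

theorem Coincident.min_le (h : Coincident L π) {a b c : C} (hab : L a ≤ L b)
    (hbc : L b ≤ L c) : min (π a) (π c) ≤ π b := by
  rcases hab.eq_or_lt with hab | hab
  · exact L.injective hab ▸ min_le_left _ _
  rcases hbc.eq_or_lt with hbc | hbc
  · exact L.injective hbc ▸ min_le_right _ _
  by_contra! hlt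
  obtain ⟨hba, hbc'⟩ := lt_min_iff.1 hlt
  exact lt_asymm hba (h a b c (.inl ⟨hab, hbc⟩) hbc')

theorem Coincident.ranked_above_on_one_side (h : Coincident L π) (p : C) :
    (∀ c, π p ≤ π c → L p ≤ L c) ∨ (∀ c, π p ≤ π c → L c ≤ L p) := by
  by_contra! hboth
  obtain ⟨⟨a, hpa, haL⟩, ⟨c, hpc, hcL⟩⟩ := hboth
  have hne : π p ≠ π c := π.injective.ne fun hpc_eq => hcL.ne (congrArg L hpc_eq)
  exact (h a p c (.inl ⟨haL, hcL⟩) (hpc.lt_of_ne hne)).not_ge hpa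

theorem Coincident.of_unimodal (x : C) (hup : ∀ a b, L a < L b → L b ≤ L x → π a < π b)
    (hdown : ∀ a b, L x ≤ L b → L b < L a → π a < π b) : Coincident L π := by
  intro a b c hbet hbc
  rcases hbet with ⟨hab, hbc'⟩ | ⟨hcb, hba⟩
  · refine hup a b hab (not_lt.1 fun hxb => ?_)
    exact lt_asymm hbc (hdown c b hxb.le hbc')
  · refine hdown a b (not_lt.1 fun hbx => ?_) hba
    exact lt_asymm hbc (hup c b hcb hbx.le)

end SinglePeaked

section PushToTop

variable {C : Type*} {m : ℕ} {L π : C ≃ Fin (m + 1)} {p c : C}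

theorem Coincident.sub_le_of_le (h : Coincident L π) (hpc : π p ≤ π c) :
    (L c : ℕ) - L p ≤ m - π p := by
  have hmaps :
      Set.MapsTo (π ∘ L.symm) (Finset.Icc (L p) (L c)) (Finset.Icc (π p) (Fin.last m)) := by
    intro j hj
    rw [Finset.coe_Icc, Set.mem_Icc] at hj
    have hmin := h.min_le (b := L.symm j) (by simpa using hj.1) (by simpa using hj.2)
    simpa [min_eq_left hpc, Fin.le_last] using hmin
  have hcard := Finset.card_le_card_of_injOn _ hmaps (π.injective.comp L.symm.injective).injOn
  simp only [Fin.card_Icc, Fin.val_last] at hcard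
  omega

-- The truncated `L c - L p` is the distance from `p` when `L p ≤ L c`, which is the case for
-- every `c` ranked above `p` once `L` is oriented so that they lie to the right of `p`.
def raiseToTop (L π : C ≃ Fin (m + 1)) (p c : C) : Fin (m + 1) :=
  if π p ≤ π c then ⟨m - (L c - L p), by omega⟩ else π c

theorem raiseToTop_of_le (hc : π p ≤ π c) : (raiseToTop L π p c : ℕ) = m - (L c - L p) := by
  simp [raiseToTop, hc]

theorem raiseToTop_of_lt (hc : π c < π p) : raiseToTop L π p c = π c := by
  simp [raiseToTop, hc.not_ge]

theorem raiseToTop_self : raiseToTop L π p p = Fin.last m := by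
  ext; simp [raiseToTop_of_le le_rfl]

theorem raiseToTop_add_le : (raiseToTop L π p c : ℕ) + π p ≤ π c + m := by
  rcases le_or_gt (π p) (π c) with hc | hc
  · rw [raiseToTop_of_le hc]; omega
  · rw [raiseToTop_of_lt hc]; omega

theorem Coincident.le_raiseToTop (h : Coincident L π) (hc : π p ≤ π c) :
    π p ≤ raiseToTop L π p c := by
  have hdist := h.sub_le_of_le hc
  rw [Fin.le_def, raiseToTop_of_le hc]; omega

theorem Coincident.raiseToTop_lt_of_le_of_lt (h : Coincident L π) {a b : C} (hpb : L p ≤ L b)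
    (hba : L b < L a) : raiseToTop L π p a < raiseToTop L π p b := by
  rcases le_or_gt (π p) (π b) with hb | hb
  · rcases le_or_gt (π p) (π a) with ha | ha
    · have hsub := h.sub_le_of_le ha
      rw [Fin.lt_def, raiseToTop_of_le ha, raiseToTop_of_le hb]; omega
    · rw [raiseToTop_of_lt ha]; exact ha.trans_le (h.le_raiseToTop hb)
  · have hpb' : L p < L b := hpb.lt_of_ne fun hpb_eq => hb.ne (by rw [L.injective hpb_eq])
    have hab := h a b p (.inr ⟨hpb', hba⟩) hb
    rwa [raiseToTop_of_lt (hab.trans hb), raiseToTop_of_lt hb]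

theorem Coincident.raiseToTop_injective (h : Coincident L π)
    (hright : ∀ c, π p ≤ π c → L p ≤ L c) : Function.Injective (raiseToTop L π p) := by
  intro a b hab
  rcases le_or_gt (π p) (π a) with ha | ha <;> rcases le_or_gt (π p) (π b) with hb | hb
  · have hdista := h.sub_le_of_le ha
    have hdistb := h.sub_le_of_le hb
    have hpa := hright a ha
    have hpb := hright b hb
    have hval := congrArg Fin.val hab
    rw [raiseToTop_of_le ha, raiseToTop_of_le hb] at hval
    exact L.injective (Fin.ext (by omega))
  · have hpb := h.le_raiseToTop ha
    rw [hab, raiseToTop_of_lt hb] at hpb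
    exact absurd hb hpb.not_gt
  · have hpa := h.le_raiseToTop hb
    rw [← hab, raiseToTop_of_lt ha] at hpa
    exact absurd ha hpa.not_gt
  · rwa [raiseToTop_of_lt ha, raiseToTop_of_lt hb, π.apply_eq_iff_eq] at hab

theorem Coincident.raiseToTop_lt_of_lt_of_le (h : Coincident L π)
    (hright : ∀ c, π p ≤ π c → L p ≤ L c) {a b : C} (hab : L a < L b)
    (hbp : L b ≤ L p) :
    raiseToTop L π p a < raiseToTop L π p b := by
  have ha : π a < π p := not_le.1 fun hpa => (hright a hpa).not_gt (hab.trans_le hbp)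
  rw [raiseToTop_of_lt ha]
  rcases le_or_gt (π p) (π b) with hb | hb
  · rw [Fin.lt_def, raiseToTop_of_le hb]; omega
  · have hbp' : L b < L p := hbp.lt_of_ne fun hbp_eq => hb.ne (by rw [L.injective hbp_eq])
    rw [raiseToTop_of_lt hb]; exact h a b p (.inl ⟨hab, hbp'⟩) hb

theorem Coincident.exists_top_of_ranked_above_right (h : Coincident L π)
    (hright : ∀ c, π p ≤ π c → L p ≤ L c) :
    ∃ π' : C ≃ Fin (m + 1), Coincident L π' ∧ π' p = Fin.last m ∧
      ∀ c, (π' c : ℕ) + π p ≤ π c + m := by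
  let π' := Equiv.ofBijective _ <| (h.raiseToTop_injective hright).bijective_of_nat_card_le
    (Nat.card_congr L).ge
  exact ⟨π', .of_unimodal p (fun _ _ => h.raiseToTop_lt_of_lt_of_le hright)
    (fun _ _ => h.raiseToTop_lt_of_le_of_lt), raiseToTop_self, fun _ => raiseToTop_add_le⟩

theorem Coincident.exists_top (h : Coincident L π) (p : C) :
    ∃ π' : C ≃ Fin (m + 1), Coincident L π' ∧ π' p = Fin.last m ∧
      ∀ c, (π' c : ℕ) + π p ≤ π c + m := by
  rcases h.ranked_above_on_one_side p with hright | hleft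
  · exact h.exists_top_of_ranked_above_right hright
  · have hrev := coincident_trans_revPerm_iff.2 h
    obtain ⟨π', hπ', htop, hle⟩ := hrev.exists_top_of_ranked_above_right (p := p)
      (by simpa [Fin.rev_le_rev] using hleft)
    exact ⟨π', coincident_trans_revPerm_iff.1 hπ', htop, hle⟩

end PushToTop

/-- In single-peaked unweighted Borda manipulation, if a successful
manipulation (all manipulator votes coincident with the harmonious order `L`)
exists, then one exists in which every manipulator places `p` (modelled as
`none`) in the highest position. -/
theorem sp_manipulation_p_on_top (m t : ℕ)
    (L : Option (Fin m) ≃ Fin (m + 1)) (s : Fin m → ℕ) (sp : ℕ)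
    (h : ∃ π : Fin t → (Option (Fin m) ≃ Fin (m + 1)),
        (∀ z, Coincident L (π z)) ∧
        (∀ c : Fin m,
          s c + ∑ z, ((π z (some c) : ℕ)) < sp + ∑ z, ((π z none : ℕ)))) :
    ∃ π : Fin t → (Option (Fin m) ≃ Fin (m + 1)),
      (∀ z, Coincident L (π z)) ∧
      (∀ z, (π z none : ℕ) = m) ∧
      (∀ c : Fin m,
        s c + ∑ z, ((π z (some c) : ℕ)) < sp + ∑ z, ((π z none : ℕ))) := by
  obtain ⟨π, hπ, hwin⟩ := h
  choose π' hπ' htop hle using fun z => (hπ z).exists_top none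
  refine ⟨π', hπ', fun z => by simp [htop z], fun c => ?_⟩
  have hsum := Finset.sum_le_sum fun z (_ : z ∈ Finset.univ) => hle z (some c)
  simp only [Finset.sum_add_distrib, Finset.sum_const, Finset.card_univ, smul_eq_mul] at hsum
  simp only [htop, Fin.val_last, Finset.sum_const, Finset.card_univ, smul_eq_mul]
  have hwin_c := hwin c
  omega
end

section
/- Let {π₁, π₂} be two votes over C ∪ {p} coincident with harmonious order L, forming a successful manipulation (p's total strictly exceeds all others). Let c ∈ C with π₁(c) = x and π₂(c) = y, and suppose there exist x' > x and y' > y with s(c) + x' + y' − 2 < s(p) + 2|C| (where s denotes nonmanipulator score plus offset as appropriate) and such that all candidates at positions x+1,…,x' in π₁ and positions y+1,…,y' in π₂ lie on the opposite side of p from c in L. Then the votes π₁', π₂' obtained by moving c up to positions x' and y' respectively (shifting the intervening candidates down by one) are also coincident with L and form a successful manipulation. -/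
/-- Candidate `d` lies on the opposite side of `p` (modelled as `none`)
from `c` in the harmonious order `L`. -/
def OppSide {n : ℕ} (L : Option (Fin n) ≃ Fin (n + 1)) (c : Fin n)
    (d : Option (Fin n)) : Prop :=
  (L (some c) < L none ∧ L none < L d) ∨ (L none < L (some c) ∧ L d < L none)

namespace Fin

variable {m : ℕ} [NeZero m] {x x' j k : Fin m}

theorem val_cycleIcc_symm (h : x ≤ x') (k : Fin m) :
    ((cycleIcc x x').symm k : ℕ) =
      if k = x then (x' : ℕ) else if x < k ∧ k ≤ x' then (k : ℕ) - 1 else k := by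
  obtain ⟨j, rfl⟩ := (cycleIcc x x').surjective k
  rw [Equiv.symm_apply_apply]
  rcases lt_or_ge j x with hj | hj
  · rw [cycleIcc_of_lt hj]; grind
  rcases lt_or_ge x' j with hj' | hj'
  · rw [cycleIcc_of_gt hj']; grind
  rcases eq_or_lt_of_le hj' with rfl | hj'
  · rw [cycleIcc_of_last h]; grind
  have hsucc : ((j + 1 : Fin m) : ℕ) = j + 1 := val_add_one_of_lt' (by omega)
  rw [cycleIcc_of_ge_of_lt hj hj']
  grind

theorem cycleIcc_symm_apply_left (h : x ≤ x') : (cycleIcc x x').symm x = x' :=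
  Fin.ext <| by simp [val_cycleIcc_symm h]

theorem cycleIcc_symm_apply_of_lt_or_gt (h : x ≤ x') (hk : k < x ∨ x' < k) :
    (cycleIcc x x').symm k = k :=
  Fin.ext <| by rw [val_cycleIcc_symm h]; grind

theorem val_cycleIcc_symm_add_one (hxk : x < k) (hkx' : k ≤ x') :
    ((cycleIcc x x').symm k : ℕ) + 1 = k := by
  rw [val_cycleIcc_symm (hxk.le.trans hkx')]; grind

theorem val_cycleIcc_symm_le (h : x ≤ x') (hk : k ≠ x) :
    ((cycleIcc x x').symm k : ℕ) ≤ k := by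
  rw [val_cycleIcc_symm h]; grind

theorem cycleIcc_symm_lt_cycleIcc_symm_iff (h : x ≤ x') (hj : j ≠ x) (hk : k ≠ x) :
    (cycleIcc x x').symm j < (cycleIcc x x').symm k ↔ j < k := by
  simp only [lt_def, val_cycleIcc_symm h]; grind

theorem lt_cycleIcc_symm_iff (h : x ≤ x') (hk : k ≠ x) :
    x' < (cycleIcc x x').symm k ↔ x' < k := by
  simp only [lt_def, val_cycleIcc_symm h]; grind

theorem cycleIcc_symm_lt_iff (h : x ≤ x') (hk : k ≠ x) :
    (cycleIcc x x').symm k < x' ↔ k ≤ x' := by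
  simp only [lt_def, le_def, val_cycleIcc_symm h]; grind

end Fin

def Between {α β : Type*} [Preorder β] (L : α → β) (a b c : α) : Prop :=
  (L a < L b ∧ L b < L c) ∨ (L c < L b ∧ L b < L a)

namespace Between

variable {α β : Type*} [Preorder β] {L : α → β} {a b c e : α}

theorem symm (h : Between L a b c) : Between L c b a :=
  Or.symm h

theorem ne_right (h : Between L a b c) : b ≠ c := by
  rintro rfl; rcases h with ⟨-, h⟩ | ⟨h, -⟩ <;> exact h.false

theorem ne_ends (h : Between L a b c) : a ≠ c := by
  rintro rfl; rcases h with ⟨h, h'⟩ | ⟨h, h'⟩ <;> exact (h.trans h').false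

theorem of_between_right (h : Between L a b c) (he : Between L b e c) : Between L a b e := by
  unfold Between at *; grind

end Between

section OppSide

variable {n : ℕ} {L : Option (Fin n) ≃ Fin (n + 1)} {c : Fin n} {b : Option (Fin n)}

theorem not_oppSide_none : ¬OppSide L c none := by
  rintro (⟨-, h⟩ | ⟨-, h⟩) <;> exact h.false

theorem OppSide.between (h : OppSide L c b) : Between L b none (some c) := by
  unfold OppSide Between at *; grind

end OppSide

namespace Coincident

open Fin

variable {n : ℕ} {L π : Option (Fin n) ≃ Fin (n + 1)} {c : Fin n} {a b : Option (Fin n)}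
  {x x' : Fin (n + 1)}

theorem lt_none_of_oppSide (hπ : Coincident L π) (hb : OppSide L c b)
    (hc : π none < π (some c)) : π b < π none :=
  hπ b none (some c) hb.between hc

theorem lt_of_oppSide (hπ : Coincident L π) (hb : OppSide L c b)
    (hab : Between L a b (some c)) (hbp : π b < π none) : π a < π b :=
  hπ a b none (hab.of_between_right hb.between) hbp

theorem window_lt_none (hπ : Coincident L π) (hx : π (some c) = x)
    (hopp : ∀ j, x < j → j ≤ x' → OppSide L c (π.symm j))
    (hxb : x < π b) (hbx' : π b ≤ x') : π b < π none := by
  have hpx : π none ≠ x := fun h => Option.some_ne_none c (π.injective (hx.trans h.symm))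
  rcases lt_or_gt_of_ne hpx with hp | hp
  · exact hπ.lt_none_of_oppSide (by simpa using hopp _ hxb hbx') (hx ▸ hp)
  · exact hbx'.trans_lt <| lt_of_not_ge fun hpx' =>
      not_oppSide_none (by simpa using hopp _ hp hpx')

theorem trans_cycleIcc_symm (hπ : Coincident L π) (hx : π (some c) = x) (hxx' : x ≤ x')
    (hopp : ∀ j, x < j → j ≤ x' → OppSide L c (π.symm j)) :
    Coincident L (π.trans (cycleIcc x x').symm) := by
  have hne : ∀ {e}, e ≠ some c → π e ≠ x := fun he h => he (π.injective (h.trans hx.symm))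
  have hwin : ∀ {b}, x < π b → π b ≤ x' → OppSide L c b ∧ π b < π none :=
    fun hxb hbx' => ⟨by simpa using hopp _ hxb hbx', hπ.window_lt_none hx hopp hxb hbx'⟩
  intro a b d (hbet : Between L a b d) hlt
  simp only [Equiv.trans_apply] at hlt ⊢
  by_cases hb : b = some c
  · subst hb
    rw [hx, cycleIcc_symm_apply_left hxx', lt_cycleIcc_symm_iff hxx' (hne hbet.ne_right.symm)]
      at hlt
    have hax : π a < x := hx ▸ hπ a _ d hbet (hx ▸ (hxx'.trans_lt hlt))
    rw [hx, cycleIcc_symm_apply_left hxx', cycleIcc_symm_apply_of_lt_or_gt hxx' (.inl hax)]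
    exact hax.trans_le hxx'
  by_cases hd : d = some c
  · subst hd
    rw [hx, cycleIcc_symm_apply_left hxx', cycleIcc_symm_lt_iff hxx' (hne hb)] at hlt
    rw [cycleIcc_symm_lt_cycleIcc_symm_iff hxx' (hne hbet.ne_ends) (hne hb)]
    rcases lt_or_gt_of_ne (hne hb) with hbx | hxb
    · exact hπ a b _ hbet (hx ▸ hbx)
    · obtain ⟨hopp_b, hbp⟩ := hwin hxb hlt
      exact hπ.lt_of_oppSide hopp_b hbet hbp
  by_cases ha : a = some c
  · subst ha
    rw [cycleIcc_symm_lt_cycleIcc_symm_iff hxx' (hne hb) (hne hd)] at hlt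
    rw [hx, cycleIcc_symm_apply_left hxx', lt_cycleIcc_symm_iff hxx' (hne hb)]
    by_contra! hbx'
    rcases lt_or_gt_of_ne (hne hb) with hbx | hxb
    · exact (hx ▸ hπ _ b d hbet hlt).asymm hbx
    · obtain ⟨hopp_b, hbp⟩ := hwin hxb hbx'
      exact (hπ.lt_of_oppSide hopp_b hbet.symm hbp).asymm hlt
  rw [cycleIcc_symm_lt_cycleIcc_symm_iff hxx' (hne hb) (hne hd)] at hlt
  rw [cycleIcc_symm_lt_cycleIcc_symm_iff hxx' (hne ha) (hne hb)]
  exact hπ a b d hbet hlt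

end Coincident

open Fin in
/-- If in a successful two-manipulator single-peaked Borda manipulation a
candidate `c` can be moved up to positions `x'` and `y'` (shifting the
intervening candidates, all on the opposite side of `p`, down by one) while
keeping its total score below `p`'s, the recast votes form another successful
single-peaked manipulation. -/
theorem sp_shift_up_solution {n : ℕ}
    (L π₁ π₂ : Option (Fin n) ≃ Fin (n + 1)) (s : Fin n → ℕ) (sp : ℕ)
    (hcoin₁ : Coincident L π₁) (hcoin₂ : Coincident L π₂)
    (hsucc : ∀ d : Fin n,
      s d + (π₁ (some d) : ℕ) + (π₂ (some d) : ℕ) < sp + 2 * n)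
    (c : Fin n) (x y x' y' : Fin (n + 1))
    (hx : π₁ (some c) = x) (hy : π₂ (some c) = y)
    (hxx' : x < x') (hyy' : y < y')
    (hscore : s c + (x' : ℕ) + (y' : ℕ) < sp + 2 * n)
    (hopp₁ : ∀ j : Fin (n + 1), x < j → j ≤ x' → OppSide L c (π₁.symm j))
    (hopp₂ : ∀ j : Fin (n + 1), y < j → j ≤ y' → OppSide L c (π₂.symm j)) :
    ∃ π₁' π₂' : Option (Fin n) ≃ Fin (n + 1),
      Coincident L π₁' ∧ Coincident L π₂' ∧
      π₁' (some c) = x' ∧ π₂' (some c) = y' ∧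
      (∀ d, π₁ d < x ∨ x' < π₁ d → π₁' d = π₁ d) ∧
      (∀ d, d ≠ some c → x < π₁ d → π₁ d ≤ x' → (π₁' d : ℕ) + 1 = (π₁ d : ℕ)) ∧
      (∀ d, π₂ d < y ∨ y' < π₂ d → π₂' d = π₂ d) ∧
      (∀ d, d ≠ some c → y < π₂ d → π₂ d ≤ y' → (π₂' d : ℕ) + 1 = (π₂ d : ℕ)) ∧
      (∀ d : Fin n,
        s d + (π₁' (some d) : ℕ) + (π₂' (some d) : ℕ) < sp + 2 * n) := by
  refine ⟨π₁.trans (cycleIcc x x').symm, π₂.trans (cycleIcc y y').symm,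
    hcoin₁.trans_cycleIcc_symm hx hxx'.le hopp₁,
    hcoin₂.trans_cycleIcc_symm hy hyy'.le hopp₂,
    by simp [hx, cycleIcc_symm_apply_left hxx'.le], by simp [hy, cycleIcc_symm_apply_left hyy'.le],
    fun d => cycleIcc_symm_apply_of_lt_or_gt hxx'.le, fun d _ => val_cycleIcc_symm_add_one,
    fun d => cycleIcc_symm_apply_of_lt_or_gt hyy'.le, fun d _ => val_cycleIcc_symm_add_one,
    fun d => ?_⟩
  rcases eq_or_ne d c with rfl | hdc
  · simpa [hx, hy, cycleIcc_symm_apply_left hxx'.le, cycleIcc_symm_apply_left hyy'.le] using hscore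
  have hd₁ : ((cycleIcc x x').symm (π₁ (some d)) : ℕ) ≤ π₁ (some d) :=
    val_cycleIcc_symm_le hxx'.le (hx ▸ π₁.injective.ne (by simpa))
  have hd₂ : ((cycleIcc y y').symm (π₂ (some d)) : ℕ) ≤ π₂ (some d) :=
    val_cycleIcc_symm_le hyy'.le (hy ▸ π₂.injective.ne (by simpa))
  simp only [Equiv.trans_apply]
  linarith [hsucc d]
end

section
/- Suppose an m×m nonnegative integer matrix M has all row sums and all column sums equal to t, and a family of t partial votes is constructed so that for each column j processed from highest to lowest, each vote's j-th position gets filled by a candidate c_i such that fewer than M[i][j] votes so far place c_i at position j. Then at every stage of this process, whenever some vote's j-th position is free, there exists a candidate c_i with strictly fewer than M[i][j] votes currently placing c_i at position j; and for any such c_i already placed elsewhere in the vote under consideration, there exists another vote that has not yet placed c_i at all. -/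
/-!
Both parts are double counting. If some vote leaves position `j` free, at most `t - 1` votes fill
it, while column `j` of `M` sums to `t`, so some candidate is placed there fewer than `M i j`
times. If candidate `i` falls short in one cell, the votes placing `i` anywhere number at most
`∑ j, #{z | f z j = some i} < ∑ j, M i j = t`, so some vote never places `i`; it is not `z`.
-/

open Finset

theorem sum_card_filter_eq_some_lt_card {α β : Type*} [Fintype α] [Fintype β] [DecidableEq β]
    (g : α → Option β) {a : α} (ha : g a = none) :
    ∑ b, #{x | g x = some b} < Fintype.card α := by
  have hfibres : Fintype.card α = #{x | g x = none} + ∑ b, #{x | g x = some b} := by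
    rw [← Fintype.sum_option (fun o => #{x | g x = o}), ← card_univ]
    exact card_eq_sum_card_fiberwise fun _ _ => mem_univ _
  have hnone : 0 < #{x | g x = none} := card_pos.mpr ⟨a, by simpa using ha⟩
  omega

theorem exists_forall_not_of_sum_card_filter_lt {α ι : Type*} [Fintype α] [Fintype ι]
    (p : α → ι → Prop) [∀ a j, Decidable (p a j)]
    (h : ∑ j, #{a | p a j} < Fintype.card α) : ∃ a, ∀ j, ¬ p a j := by
  classical
  have hcover : #{a | ∃ j, p a j} < Fintype.card α := by
    calc #{a | ∃ j, p a j} = #(univ.biUnion fun j => {a | p a j}) := by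
            congr 1; ext a; simp
      _ ≤ ∑ j, #{a | p a j} := card_biUnion_le
      _ < Fintype.card α := h
  obtain ⟨a, -, ha⟩ := exists_mem_notMem_of_card_lt_card (hcover.trans_eq card_univ.symm)
  exact ⟨a, fun j hj => ha (mem_filter.mpr ⟨mem_univ a, j, hj⟩)⟩

/-- `f z j` is the candidate placed by partial vote `z` at position `j` (or `none`). -/
theorem fmm_construction_invariants_general (m t : ℕ)
    (M : Fin m → Fin m → ℕ)
    (hrow : ∀ i, ∑ j, M i j = t)
    (hcol : ∀ j, ∑ i, M i j = t)
    (f : Fin t → Fin m → Option (Fin m))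
    (hcnt : ∀ i j,
      (Finset.univ.filter (fun z : Fin t => f z j = some i)).card ≤ M i j) :
    (∀ j : Fin m, ∀ z : Fin t, f z j = none →
      ∃ i : Fin m,
        (Finset.univ.filter (fun z' : Fin t => f z' j = some i)).card < M i j) ∧
    (∀ i j : Fin m, ∀ z : Fin t,
      (Finset.univ.filter (fun z' : Fin t => f z' j = some i)).card < M i j →
      (∃ j', f z j' = some i) →
      ∃ z' : Fin t, z' ≠ z ∧ ∀ j', f z' j' ≠ some i) := by
  constructor
  · intro j z hz
    have hlt : ∑ i, #{z' | f z' j = some i} < ∑ i, M i j := by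
      simpa [hcol j] using sum_card_filter_eq_some_lt_card (f · j) hz
    obtain ⟨i, -, hi⟩ := exists_lt_of_sum_lt hlt
    exact ⟨i, hi⟩
  · rintro i j z hlt ⟨j₀, hj₀⟩
    have hsum : ∑ j', #{z' | f z' j' = some i} < Fintype.card (Fin t) := by
      calc ∑ j', #{z' | f z' j' = some i} < ∑ j', M i j' :=
            sum_lt_sum (fun j' _ => hcnt i j') ⟨j, mem_univ j, hlt⟩
        _ = Fintype.card (Fin t) := by rw [hrow i, Fintype.card_fin]
    obtain ⟨z', hz'⟩ := exists_forall_not_of_sum_card_filter_lt (fun z' j' => f z' j' = some i) hsum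
    exact ⟨z', by rintro rfl; exact hz' j₀ hj₀, hz'⟩

/-- Counting invariants in the construction of votes from a Filling Magic
Matrix solution.  `f z j` is the candidate placed by partial vote `z` at
position `j` (or `none`).  If the current placement counts respect `M`, then:
(a) whenever some vote's position `j` is free there is a candidate `i` placed
at `j` fewer than `M i j` times; (b) if moreover `i` is already placed
somewhere in vote `z`, then some other vote has not placed `i` at all. -/
theorem fmm_construction_invariants (m t : ℕ)
    (M : Fin m → Fin m → ℕ)
    (hrow : ∀ i, ∑ j, M i j = t)
    (hcol : ∀ j, ∑ i, M i j = t)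
    (f : Fin t → Fin m → Option (Fin m))
    (hinj : ∀ z j j', f z j ≠ none → f z j = f z j' → j = j')
    (hcnt : ∀ i j,
      (Finset.univ.filter (fun z : Fin t => f z j = some i)).card ≤ M i j) :
    (∀ j : Fin m, ∀ z : Fin t, f z j = none →
      ∃ i : Fin m,
        (Finset.univ.filter (fun z' : Fin t => f z' j = some i)).card < M i j) ∧
    (∀ i j : Fin m, ∀ z : Fin t,
      (Finset.univ.filter (fun z' : Fin t => f z' j = some i)).card < M i j →
      (∃ j', f z j' = some i) →
      ∃ z' : Fin t, z' ≠ z ∧ ∀ j', f z' j' ≠ some i) :=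
  fmm_construction_invariants_general m t M hrow hcol f hcnt
end

section
/- Let π_z and π_{z'} be two partial injective votes over the same candidate set, and suppose candidate c is placed by π_z at position j' but not placed by π_{z'}. Construct the bipartite graph B whose left vertices are candidates placed by π_{z'} at positions > j̄, whose right vertices are candidates placed by π_z at positions > j̄, with an edge between two vertices iff they represent the same candidate or they occupy the same position (> j̄) in the two votes but are distinct candidates. Then B has maximum degree 2, and there exists in B a simple path from c to some candidate placed by π_{z'} but not by π_z at positions > j̄. -/
/-- The auxiliary bipartite switching graph.  `pz' a` (resp. `pz b`) is the
position at which the partial vote `π_{z'}` (resp. `π_z`) places candidate `a`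
(resp. `b`), if any.  A left vertex `inl a` and a right vertex `inr b` are
related when both candidates are placed at positions above `j̄` in the
respective votes and either they are the same candidate or they occupy the
same position. -/
def switchRel {m n : ℕ} (pz pz' : Fin m → Option (Fin n)) (jbar : Fin n) :
    (Fin m ⊕ Fin m) → (Fin m ⊕ Fin m) → Prop :=
  fun u v =>
    match u, v with
    | Sum.inl a, Sum.inr b =>
        (∃ ja, pz' a = some ja ∧ jbar < ja) ∧
        (∃ jb, pz b = some jb ∧ jbar < jb) ∧
        (a = b ∨ pz' a = pz b)
    | _, _ => False

/-!
The degree bound holds because a left vertex `a` can only be joined to `a` itself and to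
the unique candidate that `π_z` places at `a`'s `π_{z'}`-position, and symmetrically on the
right.

For the path it suffices to reach such a `d` from `c`, since a walk shortens to a path.
If no such `d` were reachable, let `S` (resp. `T`) be the candidates placed above `j̄` by
`π_{z'}` (resp. `π_z`) whose left (resp. right) vertex is reachable from `c`. Every `a ∈ S`
is then also placed above `j̄` by `π_z`, so `a ∈ T` through the edge between the two copies
of `a`; and `c ∈ T \ S`. On the other hand, sending `b ∈ T` to the candidate that `π_{z'}`
places at `b`'s `π_z`-position is an injection `T → S`, since `π_{z'}` fills every position
above `j̄`. Hence `#S < #T ≤ #S`.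
-/

open SimpleGraph Sum Finset

variable {m n : ℕ}

def PlacedAbove (p : Fin m → Option (Fin n)) (jbar : Fin n) (a : Fin m) : Prop :=
  ∃ j, p a = some j ∧ jbar < j

abbrev switchGraph (pz pz' : Fin m → Option (Fin n)) (jbar : Fin n) :
    SimpleGraph (Fin m ⊕ Fin m) :=
  fromRel (switchRel pz pz' jbar)

lemma Set.subsingleton_setOf_ne_none_eq {α β : Type*} {p : α → Option β}
    (hp : ∀ a a', p a ≠ none → p a = p a' → a = a') (o : Option β) :
    {a | p a ≠ none ∧ p a = o}.Subsingleton :=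
  fun a ha a' ha' => hp a a' ha.1 (ha.2.trans ha'.2.symm)

lemma Set.ncard_le_two_of_subset_insert {α : Type*} [Finite α] {s t : Set α} {x : α}
    (hst : s ⊆ insert x t) (ht : t.Subsingleton) : s.ncard ≤ 2 :=
  calc s.ncard ≤ (insert x t).ncard := Set.ncard_le_ncard hst
    _ ≤ t.ncard + 1 := Set.ncard_insert_le x t
    _ ≤ 2 := by have := (Set.ncard_le_one_iff_subsingleton.2 ht); omega

namespace switchGraph

variable {pz pz' : Fin m → Option (Fin n)} {jbar : Fin n}

@[simp]
lemma adj_inl_inr {a b : Fin m} : (switchGraph pz pz' jbar).Adj (inl a) (inr b) ↔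
    PlacedAbove pz' jbar a ∧ PlacedAbove pz jbar b ∧ (a = b ∨ pz' a = pz b) := by
  simp [switchRel, PlacedAbove]

@[simp]
lemma adj_inr_inl {a b : Fin m} : (switchGraph pz pz' jbar).Adj (inr b) (inl a) ↔
    PlacedAbove pz' jbar a ∧ PlacedAbove pz jbar b ∧ (a = b ∨ pz' a = pz b) := by
  rw [adj_comm, adj_inl_inr]

@[simp]
lemma not_adj_inl_inl {a a' : Fin m} : ¬(switchGraph pz pz' jbar).Adj (inl a) (inl a') := by
  simp [switchRel]

@[simp]
lemma not_adj_inr_inr {b b' : Fin m} : ¬(switchGraph pz pz' jbar).Adj (inr b) (inr b') := by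
  simp [switchRel]

lemma neighborSet_inl_subset (a : Fin m) :
    (switchGraph pz pz' jbar).neighborSet (inl a) ⊆
      insert (inr a) (inr '' {b | pz b ≠ none ∧ pz b = pz' a}) := by
  rintro (a' | b) hv
  · exact absurd hv not_adj_inl_inl
  · obtain ⟨⟨ja, hja, -⟩, -, rfl | hab⟩ := adj_inl_inr.1 hv
    · exact Set.mem_insert _ _
    · exact Or.inr ⟨b, ⟨by simp [← hab, hja], hab.symm⟩, rfl⟩

lemma neighborSet_inr_subset (b : Fin m) :
    (switchGraph pz pz' jbar).neighborSet (inr b) ⊆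
      insert (inl b) (inl '' {a | pz' a ≠ none ∧ pz' a = pz b}) := by
  rintro (a | b') hv
  · obtain ⟨⟨ja, hja, -⟩, -, rfl | hab⟩ := adj_inr_inl.1 hv
    · exact Set.mem_insert _ _
    · exact Or.inr ⟨a, ⟨by simp [hja], hab⟩, rfl⟩
  · exact absurd hv not_adj_inr_inr

lemma ncard_neighborSet_le_two
    (hinjz : ∀ a a' : Fin m, pz a ≠ none → pz a = pz a' → a = a')
    (hinjz' : ∀ a a' : Fin m, pz' a ≠ none → pz' a = pz' a' → a = a')
    (v : Fin m ⊕ Fin m) : ((switchGraph pz pz' jbar).neighborSet v).ncard ≤ 2 := by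
  rcases v with a | b
  · exact Set.ncard_le_two_of_subset_insert (neighborSet_inl_subset a)
      ((Set.subsingleton_setOf_ne_none_eq hinjz _).image _)
  · exact Set.ncard_le_two_of_subset_insert (neighborSet_inr_subset b)
      ((Set.subsingleton_setOf_ne_none_eq hinjz' _).image _)

lemma exists_reachable_inl_not_placedAbove
    (hinjz : ∀ a a' : Fin m, pz a ≠ none → pz a = pz a' → a = a')
    (hfullz' : ∀ j : Fin n, jbar < j → ∃ a, pz' a = some j)
    {c : Fin m} (hc : PlacedAbove pz jbar c) (hc' : pz' c = none) :
    ∃ d, PlacedAbove pz' jbar d ∧ ¬PlacedAbove pz jbar d ∧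
      (switchGraph pz pz' jbar).Reachable (inr c) (inl d) := by
  classical
  by_contra! hnone
  set G := switchGraph pz pz' jbar
  let S := univ.filter fun a => PlacedAbove pz' jbar a ∧ G.Reachable (inr c) (inl a)
  let T := univ.filter fun b => PlacedAbove pz jbar b ∧ G.Reachable (inr c) (inr b)
  have hST : S ⊆ T := fun a ha => by
    simp only [S, mem_filter, mem_univ, true_and] at ha
    obtain ⟨ha', hreach⟩ := ha
    have ha : PlacedAbove pz jbar a := not_not.1 fun h => hnone a ha' h hreach
    simpa [T, ha] using hreach.trans (adj_inl_inr.2 ⟨ha', ha, Or.inl rfl⟩).reachable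
  have hcT : c ∈ T := by simp [T, hc]
  have hcS : c ∉ S := by simp only [S, mem_filter]; simp [PlacedAbove, hc']
  have hTS : #T ≤ #S := by
    refine card_le_card_of_forall_subsingleton (fun b a => pz' a = pz b) (fun b hb => ?_)
      (fun _ _ b₁ hb₁ b₂ hb₂ => ?_)
    · simp only [T, mem_filter, mem_univ, true_and] at hb
      obtain ⟨⟨j, hbj, hj⟩, hreach⟩ := hb
      obtain ⟨a, ha⟩ := hfullz' j hj
      have hadj : G.Adj (inr b) (inl a) :=
        adj_inr_inl.2 ⟨⟨j, ha, hj⟩, ⟨j, hbj, hj⟩, Or.inr (ha.trans hbj.symm)⟩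
      exact ⟨a, by simpa [S] using ⟨⟨j, ha, hj⟩, hreach.trans hadj.reachable⟩,
        ha.trans hbj.symm⟩
    · simp only [T, mem_filter, mem_univ, true_and, Set.mem_ofPred_eq] at hb₁ hb₂
      obtain ⟨⟨⟨j, hj, -⟩, -⟩, h₁⟩ := hb₁
      exact hinjz b₁ b₂ (by simp [hj]) (h₁.symm.trans hb₂.2)
  exact (card_lt_card ((ssubset_iff_of_subset hST).2 ⟨c, hcT, hcS⟩)).not_ge hTS

end switchGraph

theorem switch_graph_path_general {m n : ℕ}
    (pz pz' : Fin m → Option (Fin n))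
    (hinjz : ∀ a a' : Fin m, pz a ≠ none → pz a = pz a' → a = a')
    (hinjz' : ∀ a a' : Fin m, pz' a ≠ none → pz' a = pz' a' → a = a')
    (jbar : Fin n)
    (hfullz' : ∀ j : Fin n, jbar < j → ∃ a, pz' a = some j)
    (c : Fin m) (j' : Fin n)
    (hc : pz c = some j') (hj' : jbar < j') (hc' : pz' c = none) :
    (∀ v, ((SimpleGraph.fromRel (switchRel pz pz' jbar)).neighborSet v).ncard ≤ 2) ∧
    (∃ d : Fin m,
      (∃ jd, pz' d = some jd ∧ jbar < jd) ∧
      ¬(∃ jd, pz d = some jd ∧ jbar < jd) ∧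
      ∃ w : (SimpleGraph.fromRel (switchRel pz pz' jbar)).Walk
          (Sum.inr c) (Sum.inl d), w.IsPath) := by
  refine ⟨switchGraph.ncard_neighborSet_le_two hinjz hinjz', ?_⟩
  obtain ⟨d, hd', hd, ⟨w⟩⟩ :=
    switchGraph.exists_reachable_inl_not_placedAbove hinjz hfullz' ⟨j', hc, hj'⟩ hc'
  exact ⟨d, hd', hd, w.bypass, w.bypass_isPath⟩

/-- The switching graph has maximum degree 2 and contains a simple path from
`c` (a candidate placed by `π_z` above `j̄` but not placed by `π_{z'}`) to some
candidate placed by `π_{z'}` above `j̄` but not placed by `π_z` above `j̄`. -/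
theorem switch_graph_path {m n : ℕ}
    (pz pz' : Fin m → Option (Fin n))
    (hinjz : ∀ a a' : Fin m, pz a ≠ none → pz a = pz a' → a = a')
    (hinjz' : ∀ a a' : Fin m, pz' a ≠ none → pz' a = pz' a' → a = a')
    (jbar : Fin n)
    (hfullz : ∀ j : Fin n, jbar < j → ∃ a, pz a = some j)
    (hfullz' : ∀ j : Fin n, jbar < j → ∃ a, pz' a = some j)
    (c : Fin m) (j' : Fin n)
    (hc : pz c = some j') (hj' : jbar < j') (hc' : pz' c = none) :
    (∀ v, ((SimpleGraph.fromRel (switchRel pz pz' jbar)).neighborSet v).ncard ≤ 2) ∧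
    (∃ d : Fin m,
      (∃ jd, pz' d = some jd ∧ jbar < jd) ∧
      ¬(∃ jd, pz d = some jd ∧ jbar < jd) ∧
      ∃ w : (SimpleGraph.fromRel (switchRel pz pz' jbar)).Walk
          (Sum.inr c) (Sum.inl d), w.IsPath) :=
  switch_graph_path_general pz pz' hinjz hinjz' jbar hfullz' c j' hc hj' hc'
end
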